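/- Let α, γ be real numbers with γ not an integer. Then for all real t: ( (γ−α−2)(γ−α−1)(1−α)(2−α) t⁴ / ( (1−γ)(2−γ)(3−γ)(4−γ)(5−γ) ) ) · ₁F₁(α; γ; t) · ₁F₁(3−α; 6−γ; −t) − (2−γ)(3−γ)(4−γ) · ₁F₁(1−α; 2−γ; −t) · ₁F₁(α−2; γ−4; t) = (γ−4)(γ−3)(γ−2) + (2α−γ)(γ−3) t. -/

import Mathlib

open Finset

/-- Pochhammer symbol `(a)ₙ = a(a+1)⋯(a+n-1)` for natural `n`. -/
noncomputable def poch (a : ℝ) (n : ℕ) : ℝ := Polynomial.eval a (ascPochhammer ℝ n)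

/-- Pochhammer symbol `(a)ₖ` for integer `k`: for `k ≥ 0` the ascending product,
and `(a)₋ₖ = (-1)ᵏ/(1-a)ₖ` for `k ≥ 0`. -/
noncomputable def pochZ (a : ℝ) (k : ℤ) : ℝ :=
  if 0 ≤ k then poch a k.toNat else (-1) ^ (-k).toNat / poch (1 - a) (-k).toNat

/-- The (generally non-terminating) Clausen series `₃F₂(a,b,c;d,e;1)`. -/
noncomputable def F32 (a b c d e : ℝ) : ℝ :=
  ∑' n : ℕ, poch a n * poch b n * poch c n / (poch d n * poch e n * n.factorial)

/-- A terminating `₃F₂(a,b,c;d,e;1)` summed over `k = 0, …, N`. -/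
noncomputable def F32sum (N : ℕ) (a b c d e : ℝ) : ℝ :=
  ∑ k ∈ Finset.range (N + 1),
    poch a k * poch b k * poch c k / (poch d k * poch e k * k.factorial)

/-- The Kummer confluent hypergeometric function `₁F₁(a;b;x)`. -/
noncomputable def F11 (a b x : ℝ) : ℝ :=
  ∑' n : ℕ, poch a n * x ^ n / (poch b n * n.factorial)

/-!
Both sides are power series in `t`. For `F₁₁(m - a; 2m - b; -t) F₁₁(a; b; t) = ∑ wₙ tⁿ`,
creative telescoping gives a three-term recurrence for `wₙ` whose coefficients depend only on
`n + m + 1`, `2a - b`, `(m - 1)²` and `(b - m)²`. The two products of the theorem are the cases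
`m = 3`, `(a, b) = (α, γ)` (coefficients `Vₙ`) and `m = -1`, `(a, b) = (α - 2, γ - 4)`
(coefficients `Uₙ`), so `Uₙ₊₄` and `Vₙ` satisfy the same recurrence; comparing two initial values
shows that `(2-γ)(3-γ)(4-γ) Uₙ₊₄` is `Vₙ` times the coefficient of `t⁴` in the theorem. As
`U₂ = U₃ = 0`, the left-hand side reduces to `-(2-γ)(3-γ)(4-γ)(U₀ + U₁ t)`.
-/

open Filter Topology

lemma poch_zero (a : ℝ) : poch a 0 = 1 := by simp [poch]

lemma poch_succ (a : ℝ) (n : ℕ) : poch a (n + 1) = poch a n * (a + n) := by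
  simp [poch, ascPochhammer_succ_right]

lemma poch_ne_zero {b : ℝ} (hb : ∀ i : ℕ, b + i ≠ 0) (n : ℕ) : poch b n ≠ 0 := by
  induction n with
  | zero => simp [poch_zero]
  | succ n ih => rw [poch_succ]; exact mul_ne_zero ih (hb n)

noncomputable def kummerTerm (a b x : ℝ) (n : ℕ) : ℝ :=
  poch a n * x ^ n / (poch b n * n.factorial)

lemma kummerTerm_zero (a b x : ℝ) : kummerTerm a b x 0 = 1 := by
  simp [kummerTerm, poch_zero]

lemma kummerTerm_one (a b x : ℝ) : kummerTerm a b x 1 = a * x / b := by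
  simp [kummerTerm, poch, ascPochhammer_one]

lemma kummerTerm_succ {b : ℝ} (a x : ℝ) (hb : ∀ i : ℕ, b + i ≠ 0) (n : ℕ) :
    kummerTerm a b x (n + 1) = x * (a + n) / ((n + 1) * (b + n)) * kummerTerm a b x n := by
  have := poch_ne_zero hb n
  have := hb n
  simp only [kummerTerm, poch_succ, Nat.factorial_succ, pow_succ, Nat.cast_mul, Nat.cast_succ]
  field_simp

lemma kummerTerm_rec {b : ℝ} (a x : ℝ) (hb : ∀ i : ℕ, b + i ≠ 0) (n : ℕ) :
    (n + 1) * (b + n) * kummerTerm a b x (n + 1) = x * (a + n) * kummerTerm a b x n := by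
  have := hb n
  rw [kummerTerm_succ a x hb]
  field_simp

lemma kummerTerm_mul (a b x y : ℝ) (n : ℕ) :
    kummerTerm a b (x * y) n = kummerTerm a b x n * y ^ n := by
  simp only [kummerTerm, mul_pow]; ring

lemma summable_norm_of_succ_eq_mul {f r : ℕ → ℝ} (hr : Tendsto r atTop (𝓝 0))
    (hf : ∀ n, f (n + 1) = r n * f n) : Summable fun n ↦ ‖f n‖ := by
  refine summable_of_ratio_norm_eventually_le (r := 1 / 2) (by norm_num) ?_
  filter_upwards [(tendsto_zero_iff_norm_tendsto_zero.mp hr).eventually_le_const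
    (by norm_num : (0 : ℝ) < 1 / 2)] with n hn
  rw [norm_norm, norm_norm, hf, norm_mul]
  exact mul_le_mul_of_nonneg_right hn (norm_nonneg _)

lemma summable_norm_kummerTerm {b : ℝ} (a x : ℝ) (hb : ∀ i : ℕ, b + i ≠ 0) :
    Summable fun n ↦ ‖kummerTerm a b x n‖ := by
  refine summable_norm_of_succ_eq_mul ?_ (kummerTerm_succ a x hb)
  have hratio : Tendsto (fun n : ℕ ↦ (a + 1 * n) / (b + 1 * n)) atTop (𝓝 1) := by
    simpa using tendsto_add_mul_div_add_mul_atTop_nhds a b (1 : ℝ) one_ne_zero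
  have := (hratio.const_mul x).mul (tendsto_one_div_add_atTop_nhds_zero_nat (𝕜 := ℝ))
  rw [mul_zero] at this
  refine this.congr fun n ↦ ?_
  field_simp

/-- Extending by zero to negative indices frees the telescoping sums below of boundary cases. -/
noncomputable def kummerTermInt (a b x : ℝ) : ℤ → ℝ :=
  Function.extend ((↑) : ℕ → ℤ) (kummerTerm a b x) 0

lemma kummerTermInt_natCast (a b x : ℝ) (n : ℕ) :
    kummerTermInt a b x n = kummerTerm a b x n :=
  Nat.cast_injective.extend_apply _ _ n

lemma kummerTermInt_of_neg (a b x : ℝ) {j : ℤ} (hj : j < 0) : kummerTermInt a b x j = 0 :=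
  Function.extend_apply' _ _ _ fun ⟨n, hn⟩ ↦ by omega

lemma kummerTermInt_rec {b : ℝ} (a x : ℝ) (hb : ∀ i : ℕ, b + i ≠ 0) (j : ℤ) :
    (j + 1) * (b + j) * kummerTermInt a b x (j + 1) = x * (a + j) * kummerTermInt a b x j := by
  rcases le_or_gt 0 j with hj | hj
  · lift j to ℕ using hj
    rw [← Nat.cast_succ, kummerTermInt_natCast, kummerTermInt_natCast]
    exact_mod_cast kummerTerm_rec a x hb j
  · rw [kummerTermInt_of_neg _ _ _ hj, mul_zero]
    rcases (show j = -1 ∨ j + 1 < 0 by omega) with rfl | hj'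
    · simp
    · rw [kummerTermInt_of_neg _ _ _ hj', mul_zero]

lemma sum_range_mul_kummerTermInt (f : ℕ → ℝ) (a b x : ℝ) {j N : ℕ} (hj : j < N) :
    ∑ k ∈ range N, f k * kummerTermInt a b x (j - k) =
      ∑ k ∈ range (j + 1), f k * kummerTerm a b x (j - k) := by
  rw [← sum_range_add_sum_Ico _ (show j + 1 ≤ N by omega)]
  have htail : ∑ k ∈ Ico (j + 1) N, f k * kummerTermInt a b x (j - k) = 0 :=
    sum_eq_zero fun k hk ↦ by
      rw [kummerTermInt_of_neg _ _ _ (by simp at hk; omega), mul_zero]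
  rw [htail, add_zero]
  refine sum_congr rfl fun k hk ↦ ?_
  rw [← kummerTermInt_natCast, Nat.cast_sub (by simp at hk; omega)]

noncomputable def kummerProdCoeff (c d a b : ℝ) (n : ℕ) : ℝ :=
  ∑ k ∈ range (n + 1), kummerTerm c d (-1) k * kummerTerm a b 1 (n - k)

lemma kummerProdCoeff_zero (c d a b : ℝ) : kummerProdCoeff c d a b 0 = 1 := by
  simp [kummerProdCoeff, kummerTerm_zero]

lemma kummerProdCoeff_one (c d a b : ℝ) : kummerProdCoeff c d a b 1 = a / b - c / d := by
  simp [kummerProdCoeff, sum_range_succ, kummerTerm_zero, kummerTerm_one]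
  ring

lemma hasSum_kummerProdCoeff {a b c d : ℝ} (hd : ∀ i : ℕ, d + i ≠ 0)
    (hb : ∀ i : ℕ, b + i ≠ 0) (t : ℝ) :
    HasSum (fun n ↦ kummerProdCoeff c d a b n * t ^ n) (F11 c d (-t) * F11 a b t) := by
  refine (hasSum_sum_range_mul_of_summable_norm (summable_norm_kummerTerm c (-t) hd)
    (summable_norm_kummerTerm a t hb)).congr_fun fun n ↦ ?_
  rw [kummerProdCoeff, sum_mul]
  refine sum_congr rfl fun k hk ↦ ?_
  rw [neg_eq_neg_one_mul t, kummerTerm_mul, ← one_mul t, kummerTerm_mul, one_mul,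
    ← pow_mul_pow_sub t (mem_range_succ_iff.mp hk)]
  ring

/-- Zeilberger's creative-telescoping certificate for `kummerProdCoeff_recurrence`. -/
noncomputable def kummerProdCert (a b m : ℝ) (n k : ℕ) : ℝ :=
  let N : ℝ := n + m + 1
  let e : ℝ := k * (k + 2 * m - b - 1)
  kummerTerm (m - a) (2 * m - b) (-1) k * e *
    ((e - 2 * (N ^ 2 - (b - m) * (1 - m))) * kummerTermInt a b 1 (n + 2 - k) +
      (k + m - a) * kummerTermInt a b 1 (n + 1 - k))

lemma kummerProdCert_succ_sub {a b c d m : ℝ} (hc : c = m - a) (hd : d = 2 * m - b)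
    (hd0 : ∀ i : ℕ, d + i ≠ 0) (hb0 : ∀ i : ℕ, b + i ≠ 0) (n k : ℕ) :
    ((n + m + 1) ^ 2 - (m - 1) ^ 2) * ((n + m + 1) ^ 2 - (b - m) ^ 2) *
        (kummerTerm c d (-1) k * kummerTermInt a b 1 (n + 2 - k)) +
      (2 * a - b) * (n + m + 1) * (1 - 2 * (n + m + 1)) *
        (kummerTerm c d (-1) k * kummerTermInt a b 1 (n + 1 - k)) +
      (n + m + 1) * (1 - (n + m + 1)) *
        (kummerTerm c d (-1) k * kummerTermInt a b 1 (n - k)) =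
    kummerProdCert a b m n (k + 1) - kummerProdCert a b m n k := by
  subst hc hd
  have hA := kummerTerm_rec (m - a) (-1) hd0 k
  have hB₁ := kummerTermInt_rec a 1 hb0 (n + 1 - k)
  have hB₀ := kummerTermInt_rec a 1 hb0 (n - k)
  rw [show (n + 1 - k + 1 : ℤ) = n + 2 - k by ring] at hB₁
  rw [show (n - k + 1 : ℤ) = n + 1 - k by ring] at hB₀
  simp only [kummerProdCert]
  rw [show (n + 2 - (k + 1 : ℕ) : ℤ) = n + 1 - k by push_cast; ring,
    show (n + 1 - (k + 1 : ℕ) : ℤ) = n - k by push_cast; ring]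
  push_cast at hB₁ hB₀ ⊢
  set A₀ := kummerTerm (m - a) (2 * m - b) (-1) k
  set B₁ := kummerTermInt a b 1 (n + 1 - k)
  set B₀ := kummerTermInt a b 1 (n - k)
  have hK : ((k : ℝ) + 1) * (2 * m - b + k) ≠ 0 := mul_ne_zero (by positivity) (hd0 k)
  refine mul_left_cancel₀ hK ?_
  set e₁ : ℝ := (k + 1) * (k + 1 + 2 * m - b - 1)
  set s : ℝ := n + k + 2 * m
  linear_combination
    -(e₁ * (e₁ - 2 * ((n + m + 1) ^ 2 - (b - m) * (1 - m))) * B₁ + e₁ * (k + 1 + m - a) * B₀) * hA +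
      A₀ * ((k + 1) * (2 * m - b + k)) * (s * (s + 1 - b)) * hB₁ +
      A₀ * ((k + 1) * (2 * m - b + k)) * (s + 1 - a) * hB₀

theorem kummerProdCoeff_recurrence {a b c d m : ℝ} (hc : c = m - a) (hd : d = 2 * m - b)
    (hd0 : ∀ i : ℕ, d + i ≠ 0) (hb0 : ∀ i : ℕ, b + i ≠ 0) (n : ℕ) :
    ((n + m + 1) ^ 2 - (m - 1) ^ 2) * ((n + m + 1) ^ 2 - (b - m) ^ 2) *
        kummerProdCoeff c d a b (n + 2) +
      (2 * a - b) * (n + m + 1) * (1 - 2 * (n + m + 1)) * kummerProdCoeff c d a b (n + 1) +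
      (n + m + 1) * (1 - (n + m + 1)) * kummerProdCoeff c d a b n = 0 := by
  have htel := sum_range_sub (kummerProdCert a b m n) (n + 3)
  rw [← sum_congr rfl fun k _ ↦ kummerProdCert_succ_sub hc hd hd0 hb0 n k] at htel
  have hstart : kummerProdCert a b m n 0 = 0 := by simp [kummerProdCert]
  have hend : kummerProdCert a b m n (n + 3) = 0 := by
    simp only [kummerProdCert]
    rw [kummerTermInt_of_neg _ _ _ (by push_cast; omega),
      kummerTermInt_of_neg _ _ _ (by push_cast; omega)]
    ring
  simp only [sum_add_distrib, ← mul_sum, hstart, hend, sub_zero] at htel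
  simp only [kummerProdCoeff]
  rw [← sum_range_mul_kummerTermInt _ a b 1 (show n + 2 < n + 3 by omega),
    ← sum_range_mul_kummerTermInt _ a b 1 (show n + 1 < n + 3 by omega),
    ← sum_range_mul_kummerTermInt _ a b 1 (show n < n + 3 by omega)]
  push_cast
  exact htel

lemma eq_of_three_term_recurrence {p q r x y : ℕ → ℝ} (hp : ∀ n, p n ≠ 0)
    (hx : ∀ n, p n * x (n + 2) + q n * x (n + 1) + r n * x n = 0)
    (hy : ∀ n, p n * y (n + 2) + q n * y (n + 1) + r n * y n = 0)
    (h₀ : x 0 = y 0) (h₁ : x 1 = y 1) (n : ℕ) : x n = y n := by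
  induction n using Nat.twoStepInduction with
  | zero => exact h₀
  | one => exact h₁
  | more n ih₀ ih₁ =>
    refine mul_left_cancel₀ (hp n) ?_
    linear_combination hx n - hy n - q n * ih₁ - r n * ih₀

section Example6

variable {α γ : ℝ}

local notation "U" => kummerProdCoeff (1 - α) (2 - γ) (α - 2) (γ - 4)
local notation "V" => kummerProdCoeff (3 - α) (6 - γ) α γ

lemma example6_nonpolar (hγ : ∀ k : ℤ, γ ≠ k) :
    (∀ i : ℕ, 2 - γ + i ≠ 0) ∧ (∀ i : ℕ, γ - 4 + i ≠ 0) ∧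
      (∀ i : ℕ, 6 - γ + i ≠ 0) ∧ (∀ i : ℕ, γ + i ≠ 0) :=
  ⟨fun i h ↦ hγ (2 + i) (by push_cast; linarith), fun i h ↦ hγ (4 - i) (by push_cast; linarith),
    fun i h ↦ hγ (6 + i) (by push_cast; linarith), fun i h ↦ hγ (-i) (by push_cast; linarith)⟩

lemma example6_U_recurrence (hγ : ∀ k : ℤ, γ ≠ k) (n : ℕ) :
    (n ^ 2 - 4) * (n ^ 2 - (γ - 3) ^ 2) * U (n + 2) + (2 * α - γ) * n * (1 - 2 * n) * U (n + 1) +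
      n * (1 - n) * U n = 0 := by
  obtain ⟨h₂, h₄, -, -⟩ := example6_nonpolar hγ
  linear_combination kummerProdCoeff_recurrence (c := 1 - α) (d := 2 - γ) (a := α - 2)
    (b := γ - 4) (m := -1) (by ring) (by ring) h₂ h₄ n

lemma example6_V_recurrence (hγ : ∀ k : ℤ, γ ≠ k) (n : ℕ) :
    ((n + 4) ^ 2 - 4) * ((n + 4) ^ 2 - (γ - 3) ^ 2) * V (n + 2) +
      (2 * α - γ) * (n + 4) * (1 - 2 * (n + 4)) * V (n + 1) +
      (n + 4) * (1 - (n + 4)) * V n = 0 := by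
  obtain ⟨-, -, h₆, h₀⟩ := example6_nonpolar hγ
  linear_combination kummerProdCoeff_recurrence (c := 3 - α) (d := 6 - γ) (a := α) (b := γ)
    (m := 3) (by ring) (by ring) h₆ h₀ n

lemma example6_U_two_three (hγ : ∀ k : ℤ, γ ≠ k) : U 2 = 0 ∧ U 3 = 0 := by
  have h₀ := example6_U_recurrence (α := α) hγ 0
  have h₁ := example6_U_recurrence (α := α) hγ 1
  push_cast at h₀ h₁
  have hU₂ : U 2 = 0 := by
    have : (γ - 3) ^ 2 ≠ 0 := pow_ne_zero 2 (sub_ne_zero.mpr (hγ 3))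
    exact (mul_eq_zero.mp (by linear_combination h₀ / 4)).resolve_left this
  refine ⟨hU₂, (mul_eq_zero.mp (?_ : (γ - 2) * (γ - 4) * U 3 = 0)).resolve_left ?_⟩
  · linear_combination h₁ / 3 + (2 * α - γ) / 3 * hU₂
  · exact mul_ne_zero (sub_ne_zero.mpr (hγ 2)) (sub_ne_zero.mpr (hγ 4))

/- The leading coefficient of the recurrence vanishes at `n = 2`, so `U 4` is not determined by
`U 0, …, U 3` and has to be computed. -/
lemma example6_U_four (hγ : ∀ k : ℤ, γ ≠ k) :
    (1 - γ) * (2 - γ) * (3 - γ) * (4 - γ) * (5 - γ) * ((2 - γ) * (3 - γ) * (4 - γ)) * U 4 =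
      (γ - α - 2) * (γ - α - 1) * (1 - α) * (2 - α) := by
  obtain ⟨hd, hb, -, -⟩ := example6_nonpolar hγ
  simp only [kummerProdCoeff, sum_range_succ, sum_range_zero, Nat.reduceSub, zero_add]
  simp only [kummerTerm_succ _ _ hd, kummerTerm_succ _ _ hb, kummerTerm_zero]
  have := hd 0; have := hd 1; have := hd 2; have := hd 3
  have := hb 0; have := hb 1; have := hb 2; have := hb 3
  push_cast at *
  field_simp
  ring

lemma example6_U_shift (hγ : ∀ k : ℤ, γ ≠ k) (n : ℕ) :
    (1 - γ) * (2 - γ) * (3 - γ) * (4 - γ) * (5 - γ) * ((2 - γ) * (3 - γ) * (4 - γ)) * U (n + 4) =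
      (γ - α - 2) * (γ - α - 1) * (1 - α) * (2 - α) * V n := by
  have hU₄ := example6_U_four (α := α) hγ
  set D := (1 - γ) * (2 - γ) * (3 - γ) * (4 - γ) * (5 - γ) * ((2 - γ) * (3 - γ) * (4 - γ))
  set K := (γ - α - 2) * (γ - α - 1) * (1 - α) * (2 - α)
  clear_value D K
  refine eq_of_three_term_recurrence (x := fun n ↦ D * U (n + 4)) (y := fun n ↦ K * V n)
    (p := fun n : ℕ ↦ ((n + 4) ^ 2 - 4) * ((n + 4) ^ 2 - (γ - 3) ^ 2))
    (q := fun n : ℕ ↦ (2 * α - γ) * (n + 4) * (1 - 2 * (n + 4)))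
    (r := fun n : ℕ ↦ (n + 4) * (1 - (n + 4))) ?_ (fun n ↦ ?_) (fun n ↦ ?_) ?_ ?_ n
  · intro n
    have h₁ : (n : ℝ) + 1 + γ ≠ 0 := fun h ↦ hγ (-(n + 1)) (by push_cast; linarith)
    have h₇ : (n : ℝ) + 7 - γ ≠ 0 := fun h ↦ hγ (n + 7) (by push_cast; linarith)
    rw [show ((n + 4 : ℝ) ^ 2 - 4) * ((n + 4) ^ 2 - (γ - 3) ^ 2) =
      (n + 2) * (n + 6) * ((n + 1 + γ) * (n + 7 - γ)) by ring]
    exact mul_ne_zero (by positivity) (mul_ne_zero h₁ h₇)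
  · have h := example6_U_recurrence (α := α) hγ (n + 4)
    rw [show n + 4 + 2 = n + 2 + 4 by ring, show n + 4 + 1 = n + 1 + 4 by ring] at h
    push_cast at h
    linear_combination D * h
  · linear_combination K * example6_V_recurrence (α := α) hγ n
  · simp only [kummerProdCoeff_zero, mul_one]
    exact hU₄
  · have h₃ := example6_U_recurrence (α := α) hγ 3
    rw [(example6_U_two_three hγ).2] at h₃
    push_cast at h₃
    have hγ₀ : γ ≠ 0 := by simpa using hγ 0
    have hγ₆ : 6 - γ ≠ 0 := sub_ne_zero.mpr (hγ 6).symm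
    refine mul_left_cancel₀ (mul_ne_zero hγ₀ hγ₆) ?_
    simp only [kummerProdCoeff_one]
    field_simp
    linear_combination D * h₃ / 5 + 3 * (2 * α - γ) * hU₄

lemma example6_U_partial_sum (hγ : ∀ k : ℤ, γ ≠ k) (t : ℝ) :
    (2 - γ) * (3 - γ) * (4 - γ) * ∑ i ∈ range 4, U i * t ^ i =
      (2 - γ) * (3 - γ) * (4 - γ) + (2 * α - γ) * (3 - γ) * t := by
  obtain ⟨hU₂, hU₃⟩ := example6_U_two_three (α := α) hγ
  have h₂ : 2 - γ ≠ 0 := sub_ne_zero.mpr (hγ 2).symm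
  have h₄ : γ - 4 ≠ 0 := sub_ne_zero.mpr (hγ 4)
  simp only [sum_range_succ, sum_range_zero, kummerProdCoeff_zero, kummerProdCoeff_one, hU₂, hU₃]
  field_simp
  ring

end Example6

theorem Kummer_example6 (α γ : ℝ) (hγ : ∀ k : ℤ, γ ≠ (k : ℝ)) (t : ℝ) :
    (γ - α - 2) * (γ - α - 1) * (1 - α) * (2 - α) * t ^ 4 /
        ((1 - γ) * (2 - γ) * (3 - γ) * (4 - γ) * (5 - γ)) *
        F11 α γ t * F11 (3 - α) (6 - γ) (-t) -
      (2 - γ) * (3 - γ) * (4 - γ) * F11 (1 - α) (2 - γ) (-t) * F11 (α - 2) (γ - 4) t =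
    (γ - 4) * (γ - 3) * (γ - 2) + (2 * α - γ) * (γ - 3) * t := by
  obtain ⟨h₂, h₄, h₆, h₀⟩ := example6_nonpolar hγ
  set D := (1 - γ) * (2 - γ) * (3 - γ) * (4 - γ) * (5 - γ)
  set K := (γ - α - 2) * (γ - α - 1) * (1 - α) * (2 - α)
  have hD : D ≠ 0 := by
    have h (k : ℤ) : (k : ℝ) - γ ≠ 0 := sub_ne_zero.mpr (hγ k).symm
    exact_mod_cast
      mul_ne_zero (mul_ne_zero (mul_ne_zero (mul_ne_zero (h 1) (h 2)) (h 3)) (h 4)) (h 5)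
  have hU := hasSum_kummerProdCoeff (c := 1 - α) (a := α - 2) h₂ h₄ t
  have hV := hasSum_kummerProdCoeff (c := 3 - α) (a := α) h₆ h₀ t
  have htail := ((hasSum_nat_add_iff' 4).mpr hU).mul_left ((2 - γ) * (3 - γ) * (4 - γ))
  have hsum := htail.unique ((hV.mul_left (K / D * t ^ 4)).congr_fun fun n ↦ by
    field_simp
    linear_combination t ^ n * t ^ 4 * example6_U_shift (α := α) hγ n)
  linear_combination -hsum - example6_U_partial_sum hγ t
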